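/- arXiv:1205.0478 — 2 statements merged into one kernel-verified Lean document; each statement's English description precedes it below -/
import Mathlib

section
/- Let $S=K[x_1,\dots,x_n,y_1,\dots,y_m]$ and let $L=\sum_{i=1}^s I_{q_i}J_{r_i}$ be a mixed product ideal with $0\le q_1<q_2<\dots<q_s\le n$ and $0\le r_s<r_{s-1}<\dots<r_1\le m$. Then the Alexander dual of $L$ equals $I_{n-q_1+1} + \sum_{i=1}^{s-1} I_{n-q_{i+1}+1} J_{m-r_i+1} + J_{m-r_s+1}$. -/
/-!
A squarefree monomial ideal generated by an upper set `D` of supports contains exactly the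
monomials `x^T` with `T ∈ D`, and its Alexander dual is generated by the `x^S` with `Sᶜ ∉ D`.
Since `I_q J_r` is generated by the supports with at least `q` variables `x` and `r` variables
`y`, membership in every ideal involved depends only on the pair of counts `(a, b)`, and the
theorem becomes a statement about staircases: under `(a, b) ↦ (n - a, m - b)`, the complement of
the upper set generated by the corners `(q_i, r_i)` is the upper set generated by
`(n - q_1 + 1, 0)`, the corners `(n - q_{i+1} + 1, m - r_i + 1)`, and `(0, m - r_s + 1)`.
-/

open MvPolynomial

/-- The squarefree Veronese ideal of degree `q` in the `x`-variables of
`K[x_1,…,x_n,y_1,…,y_m]`.  Note `mixedI n m K 0 = ⊤` and `mixedI n m K q = 0`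
for `q > n`, matching the conventions `I_0 = S`, `I_q = (0)` for `q > n`. -/
noncomputable def mixedI (n m : ℕ) (K : Type*) [Field K] (q : ℕ) :
    Ideal (MvPolynomial (Fin n ⊕ Fin m) K) :=
  Ideal.span {p | ∃ A : Finset (Fin n), A.card = q ∧ p = ∏ i ∈ A, X (Sum.inl i)}

/-- The squarefree Veronese ideal of degree `r` in the `y`-variables. -/
noncomputable def mixedJ (n m : ℕ) (K : Type*) [Field K] (r : ℕ) :
    Ideal (MvPolynomial (Fin n ⊕ Fin m) K) :=
  Ideal.span {p | ∃ B : Finset (Fin m), B.card = r ∧ p = ∏ j ∈ B, X (Sum.inr j)}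

/-- The Alexander dual of a squarefree monomial ideal `I`. -/
noncomputable def alexDual {σ : Type*} [Fintype σ] [DecidableEq σ] {K : Type*} [Field K]
    (I : Ideal (MvPolynomial σ K)) : Ideal (MvPolynomial σ K) :=
  Ideal.span {p | ∃ S : Finset σ, (∏ i ∈ Sᶜ, (X i : MvPolynomial σ K)) ∉ I ∧
    p = ∏ i ∈ S, X i}

open Finset

namespace MvPolynomial

variable {σ R : Type*} [CommSemiring R]

noncomputable def squarefreeMonomialIdeal (D : Set (Finset σ)) : Ideal (MvPolynomial σ R) :=
  Ideal.span ((fun U => ∏ i ∈ U, X i) '' D)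

theorem prod_X_eq_monomial (T : Finset σ) :
    ∏ i ∈ T, (X i : MvPolynomial σ R) = monomial (∑ i ∈ T, Finsupp.single i 1) 1 :=
  (monomial_sum_one T _).symm

theorem sum_single_one_le_iff {U T : Finset σ} :
    ∑ i ∈ U, Finsupp.single i 1 ≤ ∑ i ∈ T, Finsupp.single i 1 ↔ U ⊆ T := by
  classical
  rw [← Finsupp.orderIsoMultiset.le_iff_le]
  simp [Finset.val_le_iff]

theorem squarefreeMonomialIdeal_union (D D' : Set (Finset σ)) :
    (squarefreeMonomialIdeal (D ∪ D') : Ideal (MvPolynomial σ R)) =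
      squarefreeMonomialIdeal D + squarefreeMonomialIdeal D' := by
  rw [squarefreeMonomialIdeal, Set.image_union, Ideal.span_union]
  rfl

theorem sum_squarefreeMonomialIdeal {ι : Type*} (t : Finset ι) (D : ι → Set (Finset σ)) :
    ∑ i ∈ t, (squarefreeMonomialIdeal (D i) : Ideal (MvPolynomial σ R)) =
      squarefreeMonomialIdeal (⋃ i ∈ t, D i) := by
  simp only [Ideal.sum_eq_sup, Finset.sup_eq_iSup, squarefreeMonomialIdeal, Set.image_iUnion₂,
    Ideal.span, Submodule.span_iUnion₂]

variable [Nontrivial R]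

theorem prod_X_mem_squarefreeMonomialIdeal_iff {D : Set (Finset σ)} {T : Finset σ} :
    ∏ i ∈ T, (X i : MvPolynomial σ R) ∈ squarefreeMonomialIdeal D ↔ ∃ U ∈ D, U ⊆ T := by
  classical
  have himage : (fun U : Finset σ => ∏ i ∈ U, (X i : MvPolynomial σ R)) '' D =
      (fun e => monomial e 1) '' ((fun U => ∑ i ∈ U, Finsupp.single i 1) '' D) := by
    rw [Set.image_image]
    simp only [prod_X_eq_monomial]
  rw [squarefreeMonomialIdeal, himage, mem_ideal_span_monomial_image, prod_X_eq_monomial,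
    support_monomial, if_neg one_ne_zero]
  simp [sum_single_one_le_iff]

theorem squarefreeMonomialIdeal_le_iff {D D' : Set (Finset σ)} :
    (squarefreeMonomialIdeal D : Ideal (MvPolynomial σ R)) ≤ squarefreeMonomialIdeal D' ↔
      ∀ U ∈ D, ∃ V ∈ D', V ⊆ U := by
  rw [squarefreeMonomialIdeal, Ideal.span_le, Set.image_subset_iff]
  exact forall₂_congr fun U _ => prod_X_mem_squarefreeMonomialIdeal_iff

theorem prod_X_mem_squarefreeMonomialIdeal_iff_of_isUpperSet {D : Set (Finset σ)}
    (hD : IsUpperSet D) {T : Finset σ} :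
    ∏ i ∈ T, (X i : MvPolynomial σ R) ∈ squarefreeMonomialIdeal D ↔ T ∈ D :=
  prod_X_mem_squarefreeMonomialIdeal_iff.trans
    ⟨fun ⟨_, hU, hUT⟩ => hD hUT hU, fun hT => ⟨T, hT, subset_rfl⟩⟩

end MvPolynomial

theorem alexDual_squarefreeMonomialIdeal {σ K : Type*} [Fintype σ] [DecidableEq σ] [Field K]
    {D : Set (Finset σ)} (hD : IsUpperSet D) :
    alexDual (squarefreeMonomialIdeal D : Ideal (MvPolynomial σ K)) =
      squarefreeMonomialIdeal {S | Sᶜ ∉ D} := by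
  simp only [alexDual, prod_X_mem_squarefreeMonomialIdeal_iff_of_isUpperSet hD]
  congr 1
  ext p
  exact exists_congr fun S => and_congr_right' eq_comm

section Bipartite

variable {α β : Type*}

def bidegreeAtLeast (a b : ℕ) : Set (Finset (α ⊕ β)) := {U | a ≤ #U.toLeft ∧ b ≤ #U.toRight}

theorem isUpperSet_bidegreeAtLeast (a b : ℕ) :
    IsUpperSet (bidegreeAtLeast a b : Set (Finset (α ⊕ β))) :=
  fun _ _ hUV ⟨ha, hb⟩ => ⟨ha.trans (card_le_card (toLeft_subset_toLeft hUV)),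
    hb.trans (card_le_card (toRight_subset_toRight hUV))⟩

theorem card_toLeft_compl [Fintype α] [Fintype β] [DecidableEq α] [DecidableEq β]
    (S : Finset (α ⊕ β)) :
    #Sᶜ.toLeft = Fintype.card α - #S.toLeft := by
  rw [← card_compl]
  congr 1
  ext
  simp

theorem card_toRight_compl [Fintype α] [Fintype β] [DecidableEq α] [DecidableEq β]
    (S : Finset (α ⊕ β)) :
    #Sᶜ.toRight = Fintype.card β - #S.toRight := by
  rw [← card_compl]
  congr 1
  ext
  simp

end Bipartite

theorem staircase_dual_iff {n m s a b : ℕ} {q r : ℕ → ℕ} (hs : 0 < s)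
    (hq : MonotoneOn q (Set.Iio s)) (hr : AntitoneOn r (Set.Iio s))
    (hqn : q (s - 1) ≤ n) (hrm : r 0 ≤ m) (ha : a ≤ n) (hb : b ≤ m) :
    (¬∃ i < s, q i ≤ n - a ∧ r i ≤ m - b) ↔
      n - q 0 + 1 ≤ a ∨ (∃ i < s - 1, n - q (i + 1) + 1 ≤ a ∧ m - r i + 1 ≤ b) ∨
        m - r (s - 1) + 1 ≤ b := by
  have hqn' : ∀ i < s, q i ≤ n := fun i hi =>
    (hq hi (Set.mem_Iio.2 (Nat.sub_one_lt_of_lt hs)) (by omega)).trans hqn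
  have hrm' : ∀ i < s, r i ≤ m := fun i hi => (hr hs hi (Nat.zero_le i)).trans hrm
  constructor
  · intro h
    push Not at h
    by_contra! hcon
    obtain ⟨h1, h2, h3⟩ := hcon
    have hall : ∀ i < s, m - r i + 1 ≤ b := by
      intro i
      induction i with
      | zero =>
        intro hi
        have := hqn' 0 hi
        have := hrm' 0 hi
        have := h 0 hi
        omega
      | succ i ih =>
        intro hi
        have := ih (by omega)
        have := h2 i (by omega)
        have := h (i + 1) hi
        have := hqn' (i + 1) hi
        have := hrm' (i + 1) hi
        omega
    exact absurd (hall (s - 1) (by omega)) (by omega)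
  · rintro (h | ⟨j, hj, hja, hjb⟩ | h) ⟨i, hi, hqi, hri⟩
    · have := hq hs hi (Nat.zero_le i)
      have := hqn' i hi
      omega
    · rcases le_or_gt i j with hij | hji
      · have := hr hi (show j < s by omega) hij
        have := hrm' j (by omega)
        omega
      · have := hq (show j + 1 < s by omega) hi hji
        have := hqn' i hi
        omega
    · have := hr hi (Nat.sub_one_lt_of_lt hs) (by omega)
      have := hrm' i hi
      omega

section Mixed

variable (n m : ℕ) (K : Type*) [Field K]

theorem mixedI_zero : mixedI n m K 0 = ⊤ :=
  (Ideal.eq_top_iff_one _).2 (Ideal.subset_span ⟨∅, card_empty, prod_empty.symm⟩)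

theorem mixedJ_zero : mixedJ n m K 0 = ⊤ :=
  (Ideal.eq_top_iff_one _).2 (Ideal.subset_span ⟨∅, card_empty, prod_empty.symm⟩)

theorem mixedI_mul_mixedJ (q r : ℕ) :
    mixedI n m K q * mixedJ n m K r = squarefreeMonomialIdeal (bidegreeAtLeast q r) := by
  have hgen : mixedI n m K q * mixedJ n m K r =
      squarefreeMonomialIdeal {U | ∃ A B, #A = q ∧ #B = r ∧ A.disjSum B = U} := by
    rw [mixedI, mixedJ, Ideal.span_mul_span', squarefreeMonomialIdeal]
    congr 1
    ext p
    simp only [Set.mem_mul, Set.mem_image]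
    constructor
    · rintro ⟨_, ⟨A, hA, rfl⟩, _, ⟨B, hB, rfl⟩, rfl⟩
      exact ⟨A.disjSum B, ⟨A, B, hA, hB, rfl⟩, prod_disjSum _ _ _⟩
    · rintro ⟨_, ⟨A, B, hA, hB, rfl⟩, rfl⟩
      exact ⟨_, ⟨A, hA, rfl⟩, _, ⟨B, hB, rfl⟩, (prod_disjSum _ _ _).symm⟩
  rw [hgen]
  refine le_antisymm (squarefreeMonomialIdeal_le_iff.2 ?_) (squarefreeMonomialIdeal_le_iff.2 ?_)
  · rintro _ ⟨A, B, hA, hB, rfl⟩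
    exact ⟨A.disjSum B, by simp [bidegreeAtLeast, hA, hB], subset_rfl⟩
  · rintro U ⟨hq, hr⟩
    obtain ⟨A, hAU, hA⟩ := exists_subset_card_eq hq
    obtain ⟨B, hBU, hB⟩ := exists_subset_card_eq hr
    exact ⟨A.disjSum B, ⟨A, B, hA, hB, rfl⟩, disjSum_subset.2 ⟨hAU, hBU⟩⟩

theorem mixedI_eq_squarefreeMonomialIdeal (q : ℕ) :
    mixedI n m K q = squarefreeMonomialIdeal (bidegreeAtLeast q 0) := by
  rw [← mixedI_mul_mixedJ, mixedJ_zero, Ideal.mul_top]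

theorem mixedJ_eq_squarefreeMonomialIdeal (r : ℕ) :
    mixedJ n m K r = squarefreeMonomialIdeal (bidegreeAtLeast 0 r) := by
  rw [← mixedI_mul_mixedJ, mixedI_zero, Ideal.top_mul]

end Mixed

theorem alexDual_mixed_product_sum_general (n m : ℕ) (K : Type*) [Field K]
    (s : ℕ) (hs : 1 ≤ s) (q r : ℕ → ℕ)
    (hq : ∀ i j, i < j → j < s → q i < q j)
    (hr : ∀ i j, i < j → j < s → r j < r i)
    (hqn : q (s - 1) ≤ n) (hrm : r 0 ≤ m) :
    alexDual (∑ i ∈ Finset.range s, mixedI n m K (q i) * mixedJ n m K (r i)) =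
      mixedI n m K (n - q 0 + 1) +
        (∑ i ∈ Finset.range (s - 1), mixedI n m K (n - q (i + 1) + 1) *
            mixedJ n m K (m - r i + 1)) +
        mixedJ n m K (m - r (s - 1) + 1) := by
  have hq_mono : MonotoneOn q (Set.Iio s) :=
    StrictMonoOn.monotoneOn fun i _ j hj hij => hq i j hij hj
  have hr_anti : AntitoneOn r (Set.Iio s) :=
    StrictAntiOn.antitoneOn fun i _ j hj hij => hr i j hij hj
  simp only [mixedI_mul_mixedJ, sum_squarefreeMonomialIdeal]
  rw [mixedI_eq_squarefreeMonomialIdeal, mixedJ_eq_squarefreeMonomialIdeal,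
    ← squarefreeMonomialIdeal_union, ← squarefreeMonomialIdeal_union,
    alexDual_squarefreeMonomialIdeal
      (isUpperSet_iUnion₂ fun i _ => isUpperSet_bidegreeAtLeast (q i) (r i))]
  congr 1
  ext S
  simp only [bidegreeAtLeast, Set.mem_ofPred_eq, Set.mem_union, or_assoc, Set.mem_iUnion,
    mem_range, exists_prop, card_toLeft_compl, card_toRight_compl, Fintype.card_fin, zero_le,
    and_true, true_and]
  exact staircase_dual_iff hs hq_mono hr_anti hqn hrm (card_finset_fin_le _) (card_finset_fin_le _)

/-- (Proposition 3.1.)  The Alexander dual of the mixed product ideal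
`∑_{i=1}^s I_{q_i} J_{r_i}` (indexed here by `i = 0,…,s-1`) equals
`I_{n-q_1+1} + ∑_{i=1}^{s-1} I_{n-q_{i+1}+1} J_{m-r_i+1} + J_{m-r_s+1}`. -/
theorem alexDual_mixed_product_sum (n m : ℕ) (K : Type*) [Field K]
    (s : ℕ) (hs : 1 ≤ s) (q r : ℕ → ℕ)
    (hq : ∀ i j, i < j → j < s → q i < q j)
    (hr : ∀ i j, i < j → j < s → r j < r i)
    (hqn : q (s - 1) ≤ n) (hrm : r 0 ≤ m)
    (hproper : (∑ i ∈ Finset.range s, mixedI n m K (q i) * mixedJ n m K (r i)) ≠ ⊤) :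
    alexDual (∑ i ∈ Finset.range s, mixedI n m K (q i) * mixedJ n m K (r i)) =
      mixedI n m K (n - q 0 + 1) +
        (∑ i ∈ Finset.range (s - 1), mixedI n m K (n - q (i + 1) + 1) *
            mixedJ n m K (m - r i + 1)) +
        mixedJ n m K (m - r (s - 1) + 1) :=
  alexDual_mixed_product_sum_general n m K s hs q r hq hr hqn hrm
end

section
/- Let $\Delta$ be the simplicial complex on $\{x_1,\dots,x_n\}\cup\{y_1,\dots,y_m\}$ whose facets are $\bigcup_{k=1}^{s'}\mathcal{F}_k$, where $\mathcal{F}_k$ consists of all subsets with exactly $q(k)$ $x$-vertices and $r(k)$ $y$-vertices, with $q(1)<\dots<q(s')\le n$ and $m\ge r(1)>\dots>r(s')\ge 0$. Then the following are equivalent: (i) $q(i+1)=q(i)+1$ and $r(i+1)=r(i)-1$ for all $i=1,\dots,s'-1$; (ii) $\Delta$ is pure and shellable; (iii) $\Delta$ is strongly connected (in particular pure). -/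
/-- Number of `x`-vertices of a subset of `{x_1,…,x_n} ∪ {y_1,…,y_m}`. -/
def xcard {n m : ℕ} (F : Finset (Fin n ⊕ Fin m)) : ℕ :=
  (F.filter fun v => v.isLeft).card

/-- Number of `y`-vertices of a subset of `{x_1,…,x_n} ∪ {y_1,…,y_m}`. -/
def ycard {n m : ℕ} (F : Finset (Fin n ⊕ Fin m)) : ℕ :=
  (F.filter fun v => v.isRight).card

/-- The facets of the complex: `⋃_{k=1}^{s'} 𝓕_k`, where `𝓕_k` is the family
of all subsets with exactly `q(k)` `x`-vertices and `r(k)` `y`-vertices. -/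
def famFacets (n m s' : ℕ) (qv rv : ℕ → ℕ) : Set (Finset (Fin n ⊕ Fin m)) :=
  {F | ∃ k, 1 ≤ k ∧ k ≤ s' ∧ xcard F = qv k ∧ ycard F = rv k}

/-- Purity: all facets have the same dimension. -/
def IsPureFam (n m s' : ℕ) (qv rv : ℕ → ℕ) : Prop :=
  ∀ k, 1 ≤ k → k ≤ s' → qv k + rv k = qv 1 + rv 1

/-- Shellability of a set of facets: they can be linearly ordered `F_1,…,F_t`
such that for all `a < b` there exist `v ∈ F_b \ F_a` and `c < b` with
`F_b \ F_c = {v}`. -/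
def Shellable {n m : ℕ} (Fac : Set (Finset (Fin n ⊕ Fin m))) : Prop :=
  ∃ (t : ℕ) (ord : Fin t → Finset (Fin n ⊕ Fin m)),
    Function.Injective ord ∧ (∀ a, ord a ∈ Fac) ∧ (∀ F ∈ Fac, ∃ a, ord a = F) ∧
    ∀ a b : Fin t, a < b →
      ∃ v ∈ ord b \ ord a, ∃ c, c < b ∧ ord b \ ord c = {v}

/-- Strong connectedness of a pure set of facets. -/
def StronglyConnected {n m : ℕ} (Fac : Set (Finset (Fin n ⊕ Fin m))) : Prop :=
  ∀ F ∈ Fac, ∀ G ∈ Fac, ∃ (t : ℕ) (c : ℕ → Finset (Fin n ⊕ Fin m)),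
    c 0 = F ∧ c t = G ∧ (∀ i ≤ t, c i ∈ Fac) ∧
    ∀ i < t, (c i ∩ c (i + 1)).card + 1 = (c i).card

/-!
Everything is governed by the number of `x`-vertices. Along a chain of facets of a pure
complex consecutive facets differ in one vertex, so this number moves by at most one; hence
strong connectivity forces the values `q(k)` to be consecutive. Conversely, when they are
consecutive the facets are exactly the `d`-sets whose number of `x`-vertices lies in an
interval. Listing them in colex order, with the `x`-vertices below the `y`-vertices, is a
shelling: if `A < B`, the colex witness `w ∈ B \ A` can be swapped for some `u ∈ A \ B` of the
same kind, or, when `w` is a `y`-vertex and `A \ B` has none, for an `x`-vertex, which moves the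
count of `B` towards that of `A`. A shelling of a pure complex joins every facet to the first
one by codimension-one steps.
-/

open Finset

section Colex

variable {V W : Type*} [LinearOrder W] (e : V ↪ W)

lemma toColex_map_lt_toColex_map_iff {A B : Finset V} :
    toColex (A.map e) < toColex (B.map e) ↔
      ∃ w ∈ B, w ∉ A ∧ ∀ u ∈ A, u ∉ B → e u < e w := by
  simp [Colex.toColex_lt_toColex_iff_exists_forall_lt]

lemma toColex_map_insert_erase_lt [DecidableEq V] {B : Finset V} {u w : V} (hw : w ∈ B)
    (hu : u ∉ B) (huw : e u < e w) :
    toColex ((insert u (B.erase w)).map e) < toColex (B.map e) := by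
  refine (toColex_map_lt_toColex_map_iff e).2 ⟨w, hw, ?_, ?_⟩
  · simp [ne_of_mem_of_not_mem hw hu]
  · intro x hx hxB
    obtain rfl : x = u := by simpa [hxB, mem_of_mem_erase] using hx
    exact huw

end Colex

lemma sdiff_insert_erase {α : Type*} [DecidableEq α] {B : Finset α} {u w : α} (hw : w ∈ B)
    (hu : u ∉ B) : B \ insert u (B.erase w) = {w} := by
  ext x
  by_cases hx : x = w <;> by_cases hxu : x = u <;> aesop

lemma card_insert_erase {α : Type*} [DecidableEq α] {B : Finset α} {u w : α} (hw : w ∈ B)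
    (hu : u ∉ B) : #(insert u (B.erase w)) = #B := by
  rw [card_insert_of_notMem (fun h => hu (mem_of_mem_erase h)), card_erase_add_one hw]

lemma card_sdiff_eq_one_iff {α : Type*} [DecidableEq α] {A B : Finset α} (h : #A = #B) :
    #(B \ A) = 1 ↔ #(A ∩ B) + 1 = #A := by
  have := card_sdiff_add_card_inter B A
  rw [inter_comm] at this
  omega

lemma Sum.isLeft_of_toLex_lt {α β : Type*} [LT α] [LT β] {u w : α ⊕ β}
    (h : toLex u < toLex w) (hw : w.isLeft) : u.isLeft := by
  rcases u with u | u <;> rcases w with w | w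
  · rfl
  · simp at hw
  · exact absurd h Sum.Lex.not_inr_lt_inl
  · simp at hw

lemma Relation.ReflTransGen.exists_nat_chain {α : Type*} {r : α → α → Prop} {a b : α}
    (h : Relation.ReflTransGen r a b) :
    ∃ (t : ℕ) (c : ℕ → α), c 0 = a ∧ c t = b ∧ ∀ i < t, r (c i) (c (i + 1)) := by
  induction h with
  | refl => exact ⟨0, fun _ => a, rfl, rfl, by simp⟩
  | @tail b d _ hbd ih =>
    obtain ⟨t, c, h0, ht, hc⟩ := ih
    refine ⟨t + 1, Function.update c (t + 1) d, by simpa using h0, by simp, fun i hi => ?_⟩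
    rcases (Nat.lt_succ_iff.1 hi).lt_or_eq with hi | rfl
    · simpa [Function.update_of_ne (by omega : i + 1 ≠ t + 1),
        Function.update_of_ne (by omega : i ≠ t + 1)] using hc i hi
    · simpa [ht] using hbd

lemma exists_eq_add_one_of_le_add_one {f : ℕ → ℕ} {a t : ℕ}
    (hf : ∀ i < t, f (i + 1) ≤ f i + 1) (h0 : f 0 ≤ a) (ht : a < f t) :
    ∃ j ≤ t, f j = a + 1 := by
  induction t with
  | zero => omega
  | succ t ih =>
    by_cases h : a < f t
    · obtain ⟨j, hj, hfj⟩ := ih (fun i hi => hf i (by omega)) h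
      exact ⟨j, by omega, hfj⟩
    · exact ⟨t + 1, le_rfl, by have := hf t (by omega); omega⟩

section Counting

variable {n m : ℕ}

lemma xcard_eq_card_toLeft (F : Finset (Fin n ⊕ Fin m)) : xcard F = #F.toLeft := by
  have : F.filter (fun v => v.isLeft) = F.toLeft.map .inl := by ext (x | x) <;> simp
  rw [xcard, this, card_map]

lemma ycard_eq_card_toRight (F : Finset (Fin n ⊕ Fin m)) : ycard F = #F.toRight := by
  have : F.filter (fun v => v.isRight) = F.toRight.map .inr := by ext (x | x) <;> simp
  rw [ycard, this, card_map]

lemma xcard_add_ycard (F : Finset (Fin n ⊕ Fin m)) : xcard F + ycard F = #F := by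
  rw [xcard_eq_card_toLeft, ycard_eq_card_toRight, card_toLeft_add_card_toRight]

lemma exists_xcard_ycard_eq {q r : ℕ} (hq : q ≤ n) (hr : r ≤ m) :
    ∃ F : Finset (Fin n ⊕ Fin m), xcard F = q ∧ ycard F = r := by
  obtain ⟨X, -, hX⟩ := exists_subset_card_eq (s := (univ : Finset (Fin n))) (by simpa using hq)
  obtain ⟨Y, -, hY⟩ := exists_subset_card_eq (s := (univ : Finset (Fin m))) (by simpa using hr)
  exact ⟨X.disjSum Y, by simp [xcard_eq_card_toLeft, hX], by simp [ycard_eq_card_toRight, hY]⟩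

lemma xcard_insert_erase {B : Finset (Fin n ⊕ Fin m)} {u w : Fin n ⊕ Fin m} (hw : w ∈ B)
    (hu : u ∉ B) :
    xcard (insert u (B.erase w)) + (if w.isLeft then 1 else 0) =
      xcard B + (if u.isLeft then 1 else 0) := by
  simp only [xcard, card_filter]
  rw [sum_insert (fun h => hu (mem_of_mem_erase h)), ← add_sum_erase B _ hw]
  ring

lemma xcard_le_xcard_add_card_sdiff (A B : Finset (Fin n ⊕ Fin m)) :
    xcard B ≤ xcard A + #(B \ A) := by
  simp only [xcard_eq_card_toLeft]
  calc #B.toLeft ≤ #(A ∪ B \ A).toLeft := by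
        rw [union_sdiff_self_eq_union]; exact card_le_card (toLeft_subset_toLeft subset_union_right)
    _ ≤ #A.toLeft + #(B \ A).toLeft := by rw [toLeft_union]; exact card_union_le _ _
    _ ≤ #A.toLeft + #(B \ A) := by gcongr; exact card_toLeft_le

lemma xcard_le_xcard_add_one_of_adjacent {A B : Finset (Fin n ⊕ Fin m)} (hcard : #A = #B)
    (hadj : #(A ∩ B) + 1 = #A) : xcard B ≤ xcard A + 1 :=
  (xcard_le_xcard_add_card_sdiff A B).trans_eq (by rw [(card_sdiff_eq_one_iff hcard).2 hadj])

end Counting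

section Shelling

variable {n m : ℕ}

lemma shellable_of_exchange {κ : Type*} [LinearOrder κ] {Fac : Set (Finset (Fin n ⊕ Fin m))}
    (key : Finset (Fin n ⊕ Fin m) → κ) (hkey : Function.Injective key)
    (hex : ∀ A ∈ Fac, ∀ B ∈ Fac, key A < key B →
      ∃ v ∈ B \ A, ∃ C ∈ Fac, key C < key B ∧ B \ C = {v}) :
    Shellable Fac := by
  classical
  let S : Finset κ := (Set.toFinite Fac).toFinset.image key
  let g := S.orderEmbOfFin rfl
  have hg : ∀ a, ∃ F ∈ Fac, key F = g a := fun a => by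
    obtain ⟨F, hF, hFa⟩ := mem_image.1 (S.orderEmbOfFin_mem rfl a)
    exact ⟨F, (Set.Finite.mem_toFinset _).1 hF, hFa⟩
  choose ord hord_mem hord_key using hg
  have hord_surj : ∀ F ∈ Fac, ∃ a, ord a = F := fun F hF => by
    obtain ⟨a, ha⟩ : key F ∈ Set.range g := by
      rw [range_orderEmbOfFin]; simpa [S] using ⟨F, hF, rfl⟩
    exact ⟨a, hkey (by rw [hord_key, ha])⟩
  have hord_lt : ∀ a b, a < b ↔ key (ord a) < key (ord b) := fun a b => by
    rw [hord_key, hord_key, g.lt_iff_lt]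
  refine ⟨#S, ord, fun a b h => g.injective (by rw [← hord_key, ← hord_key, h]), hord_mem,
    hord_surj, fun a b hab => ?_⟩
  obtain ⟨v, hv, C, hC, hCb, hbC⟩ := hex _ (hord_mem a) _ (hord_mem b) ((hord_lt a b).1 hab)
  obtain ⟨c, rfl⟩ := hord_surj C hC
  exact ⟨v, hv, c, (hord_lt c b).2 hCb, hbC⟩

lemma exists_swap_xcard_mem_uIcc {A B : Finset (Fin n ⊕ Fin m)} (hcard : #A = #B)
    {w : Fin n ⊕ Fin m} (hwB : w ∈ B) (hwA : w ∉ A)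
    (hlt : ∀ u ∈ A, u ∉ B → toLex u < toLex w) :
    ∃ u ∈ A \ B, xcard (insert u (B.erase w)) ∈ Set.uIcc (xcard A) (xcard B) := by
  by_cases hside : ∃ u ∈ A \ B, u.isLeft = w.isLeft
  · obtain ⟨u, hu, hside⟩ := hside
    have hswap := xcard_insert_erase hwB (mem_sdiff.1 hu).2
    rw [hside, add_left_inj] at hswap
    exact ⟨u, hu, hswap ▸ Set.right_mem_uIcc⟩
  push Not at hside
  obtain ⟨u, hu⟩ : (A \ B).Nonempty := by
    rw [← card_pos, card_sdiff_comm hcard]; exact card_pos.2 ⟨w, mem_sdiff.2 ⟨hwB, hwA⟩⟩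
  have hw : w.isLeft = false := by
    by_contra hw
    rw [Bool.not_eq_false] at hw
    exact hside u hu ((Sum.isLeft_of_toLex_lt (hlt u (mem_sdiff.1 hu).1 (mem_sdiff.1 hu).2)
      hw).trans hw.symm)
  have hleft : ∀ x ∈ A \ B, x.isLeft := fun x hx => by simpa [hw] using hside x hx
  have hy : ycard A < ycard B := by
    rcases w with x | y
    · simp at hw
    rw [ycard_eq_card_toRight, ycard_eq_card_toRight]
    refine card_lt_card ((ssubset_iff_of_subset fun z hz => ?_).2 ⟨y, by simpa, by simpa⟩)
    by_contra hzB
    simpa using hleft (.inr z) (mem_sdiff.2 ⟨mem_toRight.1 hz, mem_toRight.2.mt hzB⟩)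
  have hswap := xcard_insert_erase hwB (mem_sdiff.1 hu).2
  simp only [hw, hleft u hu, Bool.false_eq_true, ite_false, ite_true, add_zero] at hswap
  have := xcard_add_ycard A
  have := xcard_add_ycard B
  exact ⟨u, hu, Set.Icc_subset_uIcc' ⟨by omega, by omega⟩⟩

theorem shellable_setOf_card_xcard_mem (d : ℕ) (I : Set ℕ) [I.OrdConnected] :
    Shellable {F : Finset (Fin n ⊕ Fin m) | #F = d ∧ xcard F ∈ I} := by
  classical
  refine shellable_of_exchange (fun F => toColex (F.map toLex.toEmbedding))
    (fun A B h => by simpa using h) ?_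
  rintro A ⟨hA, hAI⟩ B ⟨hB, hBI⟩ hAB
  obtain ⟨w, hwB, hwA, hlt⟩ := (toColex_map_lt_toColex_map_iff _).1 hAB
  obtain ⟨u, hu, hxu⟩ := exists_swap_xcard_mem_uIcc (hA.trans hB.symm) hwB hwA hlt
  obtain ⟨huA, huB⟩ := mem_sdiff.1 hu
  exact ⟨w, mem_sdiff.2 ⟨hwB, hwA⟩, insert u (B.erase w),
    ⟨(card_insert_erase hwB huB).trans hB, Set.OrdConnected.uIcc_subset ‹_› hAI hBI hxu⟩,
    toColex_map_insert_erase_lt _ hwB huB (hlt u huA huB), sdiff_insert_erase hwB huB⟩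

end Shelling

theorem stronglyConnected_of_shellable {n m d : ℕ} {Fac : Set (Finset (Fin n ⊕ Fin m))}
    (hcard : ∀ F ∈ Fac, #F = d) (hs : Shellable Fac) : StronglyConnected Fac := by
  let R : Finset (Fin n ⊕ Fin m) → Finset (Fin n ⊕ Fin m) → Prop :=
    fun A B => A ∈ Fac ∧ B ∈ Fac ∧ #(A ∩ B) + 1 = #A
  have hR_symm : ∀ A B, R A B → R B A := fun A B ⟨hA, hB, h⟩ =>
    ⟨hB, hA, by rw [inter_comm, hcard B hB, ← hcard A hA]; exact h⟩
  have hsymm : ∀ {A B}, Relation.ReflTransGen R A B → Relation.ReflTransGen R B A := fun h =>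
    Relation.ReflTransGen.mono (fun x y hxy => hR_symm y x hxy) _ _
      (Relation.reflTransGen_swap.2 h)
  suffices hconn : ∀ F ∈ Fac, ∀ G ∈ Fac, Relation.ReflTransGen R F G by
    intro F hF G hG
    obtain ⟨t, c, h0, ht, hc⟩ := (hconn F hF G hG).exists_nat_chain
    refine ⟨t, c, h0, ht, fun i hi => ?_, fun i hi => (hc i hi).2.2⟩
    rcases hi.lt_or_eq with hi | rfl
    · exact (hc i hi).1
    · exact ht ▸ hG
  obtain ⟨t, ord, -, hmem, hsurj, hshell⟩ := hs
  have hfirst : ∀ a b : Fin t, (a : ℕ) = 0 → Relation.ReflTransGen R (ord a) (ord b) := by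
    intro a b ha
    induction b using WellFoundedLT.induction with
    | _ b ih =>
      rcases eq_or_ne a b with rfl | hab
      · exact .refl
      obtain ⟨v, -, c, hcb, hbc⟩ := hshell a b (lt_of_le_of_ne (Fin.le_def.2 (by omega)) hab)
      have hadj : #(ord c ∩ ord b) + 1 = #(ord c) :=
        (card_sdiff_eq_one_iff (by rw [hcard _ (hmem c), hcard _ (hmem b)])).1 (by simp [hbc])
      exact (ih c hcb).tail ⟨hmem c, hmem b, hadj⟩
  intro F hF G hG
  obtain ⟨a, rfl⟩ := hsurj F hF
  obtain ⟨b, rfl⟩ := hsurj G hG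
  have hz := hfirst ⟨0, a.pos⟩
  exact (hsymm (hz a rfl)).trans (hz b rfl)

section Profiles

def ConsecutiveProfiles (s' : ℕ) (qv rv : ℕ → ℕ) : Prop :=
  ∀ i, 1 ≤ i → i < s' → qv (i + 1) = qv i + 1 ∧ rv i = rv (i + 1) + 1

variable {n m s' : ℕ} {qv rv : ℕ → ℕ}

lemma card_of_mem_famFacets (hpure : IsPureFam n m s' qv rv) {F : Finset (Fin n ⊕ Fin m)}
    (hF : F ∈ famFacets n m s' qv rv) : #F = qv 1 + rv 1 := by
  obtain ⟨k, hk1, hks, hx, hy⟩ := hF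
  rw [← xcard_add_ycard, hx, hy, hpure k hk1 hks]

lemma exists_mem_famFacets_xcard_eq (hq : StrictMonoOn qv (Set.Icc 1 s')) (hqn : qv s' ≤ n)
    (hrm : rv 1 ≤ m) (hpure : IsPureFam n m s' qv rv) {k : ℕ} (hk : k ∈ Set.Icc 1 s') :
    ∃ F ∈ famFacets n m s' qv rv, xcard F = qv k := by
  have hqk : qv k ≤ qv s' := hq.monotoneOn hk ⟨hk.1.trans hk.2, le_rfl⟩ hk.2
  have hq1 : qv 1 ≤ qv k := hq.monotoneOn ⟨le_rfl, hk.1.trans hk.2⟩ hk hk.1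
  have := hpure k hk.1 hk.2
  obtain ⟨F, hx, hy⟩ := exists_xcard_ycard_eq (n := n) (m := m) (hqk.trans hqn)
    (show rv k ≤ m by omega)
  exact ⟨F, ⟨k, hk.1, hk.2, hx, hy⟩, hx⟩

namespace ConsecutiveProfiles

lemma succ_eq (h : ConsecutiveProfiles s' qv rv) :
    ∀ j < s', qv (j + 1) = qv 1 + j ∧ rv (j + 1) + j = rv 1
  | 0, _ => by simp
  | j + 1, hj => by
    have := h.succ_eq j (by omega)
    have := h (j + 1) (by omega) hj
    omega

lemma isPureFam (h : ConsecutiveProfiles s' qv rv) (n m : ℕ) : IsPureFam n m s' qv rv :=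
  fun k hk1 hks => by
    have := h.succ_eq (k - 1) (by omega)
    rw [Nat.sub_add_cancel hk1] at this
    omega

lemma famFacets_eq (h : ConsecutiveProfiles s' qv rv) :
    famFacets n m s' qv rv =
      {F | #F = qv 1 + rv 1 ∧ xcard F ∈ Set.Ico (qv 1) (qv 1 + s')} := by
  ext F
  have hF := xcard_add_ycard F
  constructor
  · rintro ⟨k, hk1, hks, hx, hy⟩
    have := h.succ_eq (k - 1) (by omega)
    rw [Nat.sub_add_cancel hk1] at this
    exact ⟨by omega, by simp only [Set.mem_Ico]; omega⟩
  · rintro ⟨hcard, hlo, hhi⟩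
    have := h.succ_eq (xcard F - qv 1) (by omega)
    exact ⟨xcard F - qv 1 + 1, by omega, by omega, by omega, by omega⟩

lemma of_stronglyConnected (hq : StrictMonoOn qv (Set.Icc 1 s')) (hqn : qv s' ≤ n)
    (hrm : rv 1 ≤ m) (hpure : IsPureFam n m s' qv rv)
    (hconn : StronglyConnected (famFacets n m s' qv rv)) : ConsecutiveProfiles s' qv rv := by
  have hlevel := fun k => exists_mem_famFacets_xcard_eq (k := k) hq hqn hrm hpure
  intro i hi1 his
  have hi : i ∈ Set.Icc 1 s' := ⟨hi1, his.le⟩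
  have hi' : i + 1 ∈ Set.Icc 1 s' := ⟨by omega, his⟩
  suffices hstep : qv (i + 1) ≤ qv i + 1 by
    have := hq hi hi' (Nat.lt_succ_self i)
    have := hpure i hi1 his.le
    have := hpure (i + 1) (by omega) his
    omega
  by_contra! hgap
  obtain ⟨F, hF, hFx⟩ := hlevel i hi
  obtain ⟨G, hG, hGx⟩ := hlevel (i + 1) hi'
  obtain ⟨t, c, rfl, ht, hc, hadj⟩ := hconn F hF G hG
  have hcard : ∀ j ≤ t, #(c j) = qv 1 + rv 1 := fun j hj =>
    card_of_mem_famFacets hpure (hc j hj)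
  obtain ⟨j, hj, hcj⟩ := exists_eq_add_one_of_le_add_one (f := fun j => xcard (c j))
    (fun j hj => xcard_le_xcard_add_one_of_adjacent (by rw [hcard j hj.le, hcard (j + 1) hj])
      (hadj j hj)) hFx.le (by simp only [ht, hGx]; omega)
  obtain ⟨k, hk1, hks, hkx, -⟩ := hc j hj
  have h1 : i < k := (hq.lt_iff_lt hi ⟨hk1, hks⟩).1 (by omega)
  have h2 : k < i + 1 := (hq.lt_iff_lt ⟨hk1, hks⟩ hi').1 (by omega)
  omega

end ConsecutiveProfiles

end Profiles

theorem pure_shellable_iff_general (n m s' : ℕ) (qv rv : ℕ → ℕ)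
    (hq : ∀ i j, 1 ≤ i → i < j → j ≤ s' → qv i < qv j)
    (hqn : qv s' ≤ n) (hrm : rv 1 ≤ m) :
    ((∀ i, 1 ≤ i → i < s' → qv (i + 1) = qv i + 1 ∧ rv i = rv (i + 1) + 1) ↔
      (IsPureFam n m s' qv rv ∧ Shellable (famFacets n m s' qv rv))) ∧
    ((IsPureFam n m s' qv rv ∧ Shellable (famFacets n m s' qv rv)) ↔
      (IsPureFam n m s' qv rv ∧ StronglyConnected (famFacets n m s' qv rv))) := by
  have hmono : StrictMonoOn qv (Set.Icc 1 s') := fun i hi j hj hij => hq i j hi.1 hij hj.2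
  have shellable_of_consecutive (h : ConsecutiveProfiles s' qv rv) :
      IsPureFam n m s' qv rv ∧ Shellable (famFacets n m s' qv rv) :=
    ⟨h.isPureFam n m, h.famFacets_eq ▸ shellable_setOf_card_xcard_mem _ _⟩
  have connected_of_shellable (h : IsPureFam n m s' qv rv ∧ Shellable (famFacets n m s' qv rv)) :
      IsPureFam n m s' qv rv ∧ StronglyConnected (famFacets n m s' qv rv) :=
    ⟨h.1, stronglyConnected_of_shellable (fun _ => card_of_mem_famFacets h.1) h.2⟩
  have consecutive_of_connected
      (h : IsPureFam n m s' qv rv ∧ StronglyConnected (famFacets n m s' qv rv)) :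
      ConsecutiveProfiles s' qv rv :=
    .of_stronglyConnected hmono hqn hrm h.1 h.2
  exact ⟨⟨shellable_of_consecutive, consecutive_of_connected ∘ connected_of_shellable⟩,
    ⟨connected_of_shellable, shellable_of_consecutive ∘ consecutive_of_connected⟩⟩

/-- (Theorem 3.12.)  For the complex with facets `⋃_{k=1}^{s'} 𝓕_k` the
following are equivalent: (i) `q(i+1) = q(i) + 1` and `r(i+1) = r(i) - 1`
for all `i`; (ii) the complex is pure and shellable; (iii) the complex is
pure and strongly connected. -/
theorem pure_shellable_iff (n m s' : ℕ) (hs' : 1 ≤ s') (qv rv : ℕ → ℕ)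
    (hq : ∀ i j, 1 ≤ i → i < j → j ≤ s' → qv i < qv j)
    (hr : ∀ i j, 1 ≤ i → i < j → j ≤ s' → rv j < rv i)
    (hqn : qv s' ≤ n) (hrm : rv 1 ≤ m) :
    ((∀ i, 1 ≤ i → i < s' → qv (i + 1) = qv i + 1 ∧ rv i = rv (i + 1) + 1) ↔
      (IsPureFam n m s' qv rv ∧ Shellable (famFacets n m s' qv rv))) ∧
    ((IsPureFam n m s' qv rv ∧ Shellable (famFacets n m s' qv rv)) ↔
      (IsPureFam n m s' qv rv ∧ StronglyConnected (famFacets n m s' qv rv))) :=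
  pure_shellable_iff_general n m s' qv rv hq hqn hrm
end
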